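/- arXiv:2007.05873 — 4 statements merged into one kernel-verified Lean document; each statement's English description precedes it below -/
import Mathlib

section
/- Let N ≥ 1, let β, c : Fin N → ℝ satisfy β n > 0 for all n, and let P ∈ ℝ be a total power budget with P + Σ_{i} c i / β i > 0. Define P̄ n := P/N − c n / β n + (1/N) Σ_{i} c i / β i. Then β n · P̄ n + c n > 0 for every n, Σ_n P̄ n = P, and for every Q : Fin N → ℝ with Σ_n Q n = P and β n · Q n + c n > 0 for all n, one has Σ_n log₂(β n · Q n + c n) ≤ Σ_n log₂(β n · P̄ n + c n), with equality if and only if Q = P̄. In other words, P̄ is the unique global maximizer of the sum-rate objective over the affine power constraint. -/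
/-!
With `T = P + Σ_i c i / β i`, the allocation `P̄` equalises every rate argument:
`β n · P̄ n + c n = β n · T / N`. For any feasible `Q`, writing `x n = β n · Q n + c n` and
`y n = β n · P̄ n + c n`, the power budget gives `Σ_n x n / y n = N`, so summing
`log (x n / y n) ≤ x n / y n - 1` yields `Σ log x ≤ Σ log y`, strictly unless `x = y`.
-/

open Finset Real

section LogSum

variable {ι : Type*} [Fintype ι] {x y : ι → ℝ}

lemma sum_log_lt_sum_log_of_sum_div_le (hx : ∀ i, 0 < x i) (hy : ∀ i, 0 < y i)
    (h : ∑ i, x i / y i ≤ Fintype.card ι) (hxy : x ≠ y) :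
    ∑ i, log (x i) < ∑ i, log (y i) := by
  obtain ⟨j, hj⟩ := Function.ne_iff.mp hxy
  have hterm : ∀ i ∈ univ, log (x i) - log (y i) ≤ x i / y i - 1 := fun i _ => by
    rw [← log_div (hx i).ne' (hy i).ne']
    exact log_le_sub_one_of_pos (div_pos (hx i) (hy i))
  have hstrict : log (x j) - log (y j) < x j / y j - 1 := by
    rw [← log_div (hx j).ne' (hy j).ne']
    refine log_lt_sub_one_of_pos (div_pos (hx j) (hy j)) ?_
    rwa [Ne, div_eq_one_iff_eq (hy j).ne']
  have := sum_lt_sum hterm ⟨j, mem_univ j, hstrict⟩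
  simp only [sum_sub_distrib, sum_const, card_univ, nsmul_one] at this
  linarith

lemma sum_log_le_sum_log_of_sum_div_le (hx : ∀ i, 0 < x i) (hy : ∀ i, 0 < y i)
    (h : ∑ i, x i / y i ≤ Fintype.card ι) : ∑ i, log (x i) ≤ ∑ i, log (y i) := by
  rcases eq_or_ne x y with rfl | hxy
  · rfl
  · exact (sum_log_lt_sum_log_of_sum_div_le hx hy h hxy).le

lemma sum_logb_eq_sum_log_div (b : ℝ) (f : ι → ℝ) :
    ∑ i, logb b (f i) = (∑ i, log (f i)) / log b :=
  (sum_div univ _ _).symm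

end LogSum

lemma sum_mul_add_div_mul {ι : Type*} [Fintype ι] {β : ι → ℝ} (hβ : ∀ i, β i ≠ 0)
    (c Q : ι → ℝ) (a : ℝ) :
    ∑ i, (β i * Q i + c i) / (β i * a) = (∑ i, Q i + ∑ i, c i / β i) / a := by
  rw [← sum_add_distrib, sum_div]
  refine sum_congr rfl fun i _ => ?_
  rw [← div_div, add_div _ _ (β i), mul_div_cancel_left₀ _ (hβ i)]

/-- Theorem 1 of the paper: the unconstrained water-filling power allocation
`P̄ n = P/N − c n / β n + (1/N) Σ_i c i / β i` is feasible (all SINRs positive),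
meets the total power budget, and is the unique global maximizer of the
sum-rate `Σ_n log₂(β n · Q n + c n)` over the affine power constraint. -/
theorem stmt_0 (N : ℕ) (hN : 1 ≤ N) (β c : Fin N → ℝ) (hβ : ∀ n, 0 < β n)
    (P : ℝ) (hP : 0 < P + ∑ i, c i / β i)
    (Pbar : Fin N → ℝ)
    (hPbar : ∀ n, Pbar n = P / (N : ℝ) - c n / β n + (1 / (N : ℝ)) * ∑ i, c i / β i) :
    (∀ n, 0 < β n * Pbar n + c n) ∧
    (∑ n, Pbar n = P) ∧
    (∀ Q : Fin N → ℝ, (∑ n, Q n = P) → (∀ n, 0 < β n * Q n + c n) →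
      (∑ n, Real.logb 2 (β n * Q n + c n) ≤ ∑ n, Real.logb 2 (β n * Pbar n + c n)) ∧
      ((∑ n, Real.logb 2 (β n * Q n + c n) = ∑ n, Real.logb 2 (β n * Pbar n + c n)) ↔
        Q = Pbar)) := by
  have hNpos : (0 : ℝ) < N := by exact_mod_cast hN
  set T := P + ∑ i, c i / β i
  have hlevel : ∀ n, β n * Pbar n + c n = β n * (T / N) := fun n => by
    rw [hPbar n]
    field_simp [(hβ n).ne']
    ring
  have hpos : ∀ n, 0 < β n * Pbar n + c n := fun n => by
    rw [hlevel n]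
    exact mul_pos (hβ n) (div_pos hP hNpos)
  have hsum : ∑ n, Pbar n = P := by
    simp only [hPbar, sum_add_distrib, sum_sub_distrib, sum_const, card_univ, Fintype.card_fin,
      nsmul_eq_mul]
    field_simp
    ring
  refine ⟨hpos, hsum, fun Q hQ hQpos => ?_⟩
  have hratio : ∑ n, (β n * Q n + c n) / (β n * Pbar n + c n) ≤ Fintype.card (Fin N) := by
    simp only [hlevel, sum_mul_add_div_mul (fun n => (hβ n).ne'), hQ, Fintype.card_fin]
    rw [div_div_cancel₀ hP.ne']
  simp only [sum_logb_eq_sum_log_div]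
  have hlog2 : 0 < log 2 := log_pos one_lt_two
  refine ⟨div_le_div_of_nonneg_right (sum_log_le_sum_log_of_sum_div_le hQpos hpos hratio)
    hlog2.le, fun heq => ?_, by rintro rfl; rfl⟩
  by_contra hne
  have hlt := sum_log_lt_sum_log_of_sum_div_le hQpos hpos hratio fun h => hne <| funext fun n =>
    mul_left_cancel₀ (hβ n).ne' (add_right_cancel (congrFun h n))
  exact (div_lt_div_of_pos_right hlt hlog2).ne heq
end

section
/- Let N ≥ 1, let β, c : Fin N → ℝ satisfy β n > 0 for all n, and let P ∈ ℝ with P + Σ_{i} c i / β i > 0. Define P̄ n := P/N − c n / β n + (1/N) Σ_{i} c i / β i. Then for every n, the marginal rate β n / (β n · P̄ n + c n) equals the common value N / (P + Σ_{i} c i / β i); in particular this marginal value is the same for all groups n. -/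
/-- Equal-marginal (water-filling) KKT condition: at the unconstrained optimum
`P̄ n = P/N − c n / β n + (1/N) Σ_i c i / β i`, the marginal rate
`β n / (β n · P̄ n + c n)` is the same for all groups, equal to
`N / (P + Σ_i c i / β i)`. -/
theorem stmt_1 (N : ℕ) (hN : 1 ≤ N) (β c : Fin N → ℝ) (hβ : ∀ n, 0 < β n)
    (P : ℝ) (hP : 0 < P + ∑ i, c i / β i)
    (Pbar : Fin N → ℝ)
    (hPbar : ∀ n, Pbar n = P / (N : ℝ) - c n / β n + (1 / (N : ℝ)) * ∑ i, c i / β i) :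
    ∀ n, β n / (β n * Pbar n + c n) = (N : ℝ) / (P + ∑ i, c i / β i) := by
  intro n
  have hNz : (N : ℝ) ≠ 0 := Nat.cast_ne_zero.2 (by omega)
  have hβn := (hβ n).ne'
  have hkey : β n * Pbar n + c n = β n * (P + ∑ i, c i / β i) / N := by
    rw [hPbar n]
    field_simp
    ring
  rw [hkey]
  rw [div_div_eq_mul_div, eq_div_iff hP.ne']
  field_simp
end

section
/- Let N ≥ 1, let β, c : Fin N → ℝ satisfy β n > 0 for all n, let P ∈ ℝ with P + Σ_{i} c i / β i > 0, and let γ : Fin N → ℝ. Define P̄ n := P/N − c n / β n + (1/N) Σ_{i} c i / β i, and let C := { Q : Fin N → ℝ | Σ_n Q n = P and β n · Q n + c n ≥ 2^{γ n} for all n }. Suppose Q* ∈ C maximizes Σ_n log₂(β n · Q n + c n) over C. Then for every index n such that the unconstrained optimum violates the QoS constraint, i.e. β n · P̄ n + c n < 2^{γ n}, the constraint is active at the optimum: β n · Q* n + c n = 2^{γ n}, equivalently Q* n = (2^{γ n} − c n)/β n. -/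
/-!
Write `xᵢ = Qᵢ + cᵢ / βᵢ`, so that the rate of group `i` is `log₂ (βᵢ xᵢ)` and the power budget
reads `∑ xᵢ = P + ∑ cᵢ / βᵢ`; the water-filling point `P̄` is the one with all `xᵢ` equal to
this average. If the rate constraint of group `n` were slack at a maximizer, moving a little
power from `n` to a group `m` with `xₘ < xₙ` would stay feasible and strictly increase
`xₙ xₘ`, hence the sum rate. So `xₙ` is minimal, in particular at most the average, which
puts the rate of `n` below that at `P̄`, below `2^γₙ`: a contradiction.
-/

namespace QoSPowerAllocation

variable {ι : Type*} [Fintype ι]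

noncomputable def sumRate (β c Q : ι → ℝ) : ℝ := ∑ i, Real.logb 2 (β i * Q i + c i)

def feasibleSet (β c r : ι → ℝ) (P : ℝ) : Set (ι → ℝ) :=
  {Q | ∑ i, Q i = P ∧ ∀ i, r i ≤ β i * Q i + c i}

theorem mul_lt_sub_mul_add {u v δ : ℝ} (hδ : 0 < δ) (hδuv : δ < u - v) :
    u * v < (u - δ) * (v + δ) := by
  nlinarith

variable [DecidableEq ι]

theorem sum_sub_single_add_single (Q : ι → ℝ) (n m : ι) (δ : ℝ) :
    ∑ i, (Q - Pi.single n δ + Pi.single m δ : ι → ℝ) i = ∑ i, Q i := by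
  simp [Finset.sum_add_distrib, Finset.sum_sub_distrib]

theorem sub_single_add_single_mem_feasibleSet {β c r Q : ι → ℝ} {P δ : ℝ} {n m : ι}
    (hQ : Q ∈ feasibleSet β c r P) (hmn : m ≠ n) (hβm : 0 ≤ β m) (hδ : 0 ≤ δ)
    (hn : r n ≤ β n * (Q n - δ) + c n) :
    Q - Pi.single n δ + Pi.single m δ ∈ feasibleSet β c r P := by
  refine ⟨(sum_sub_single_add_single Q n m δ).trans hQ.1, fun i => ?_⟩
  rcases eq_or_ne i n with rfl | hin
  · simpa [hmn.symm] using hn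
  rcases eq_or_ne i m with rfl | him
  · simp only [Pi.add_apply, Pi.sub_apply, Pi.single_eq_same, Pi.single_eq_of_ne hin, sub_zero]
    nlinarith [hQ.2 i]
  · simpa [hin, him] using hQ.2 i

theorem sumRate_lt_sub_single_add_single {β c Q : ι → ℝ} {δ : ℝ} {n m : ι}
    (hβ : ∀ i, 0 < β i) (hQ : ∀ i, 0 < β i * Q i + c i) (hmn : m ≠ n) (hδ : 0 < δ)
    (hδnm : δ < (Q n + c n / β n) - (Q m + c m / β m)) (hQn : 0 < β n * (Q n - δ) + c n) :
    sumRate β c Q < sumRate β c (Q - Pi.single n δ + Pi.single m δ) := by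
  set Q' := Q - Pi.single n δ + Pi.single m δ
  have hQ'n : Q' n = Q n - δ := by simp [Q', hmn.symm]
  have hQ'm : Q' m = Q m + δ := by simp [Q', hmn]
  have hQ'other (i : ι) (hin : i ≠ n) (him : i ≠ m) : Q' i = Q i := by simp [Q', hin, him]
  have hQm' : 0 < β m * Q' m + c m := by rw [hQ'm]; nlinarith [hQ m, hβ m]
  have hprod : (β n * Q n + c n) * (β m * Q m + c m) <
      (β n * Q' n + c n) * (β m * Q' m + c m) := by
    have hβn := (hβ n).ne'
    have hβm := (hβ m).ne'
    calc (β n * Q n + c n) * (β m * Q m + c m)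
        = β n * β m * ((Q n + c n / β n) * (Q m + c m / β m)) := by field_simp
      _ < β n * β m * ((Q n + c n / β n - δ) * (Q m + c m / β m + δ)) :=
          mul_lt_mul_of_pos_left (mul_lt_sub_mul_add hδ hδnm) (mul_pos (hβ n) (hβ m))
      _ = (β n * Q' n + c n) * (β m * Q' m + c m) := by
          rw [hQ'n, hQ'm]
          field_simp
          ring
  have hdiff : sumRate β c Q' - sumRate β c Q =
      Real.logb 2 ((β n * Q' n + c n) * (β m * Q' m + c m)) -
      Real.logb 2 ((β n * Q n + c n) * (β m * Q m + c m)) := by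
    rw [sumRate, sumRate, ← Finset.sum_sub_distrib, Fintype.sum_eq_add n m hmn.symm,
      Real.logb_mul (by rw [hQ'n]; exact hQn.ne') hQm'.ne',
      Real.logb_mul (hQ n).ne' (hQ m).ne']
    · ring
    · rintro i ⟨hin, him⟩
      rw [hQ'other i hin him, sub_self]
  have := Real.logb_lt_logb one_lt_two (mul_pos (hQ n) (hQ m)) hprod
  linarith

theorem le_of_isMaxOn_of_lt {β c r Q : ι → ℝ} {P : ℝ} {n : ι}
    (hβ : ∀ i, 0 < β i) (hr : ∀ i, 0 < r i) (hQ : Q ∈ feasibleSet β c r P)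
    (hmax : IsMaxOn (sumRate β c) (feasibleSet β c r P) Q) (hn : r n < β n * Q n + c n)
    (m : ι) : Q n + c n / β n ≤ Q m + c m / β m := by
  by_contra! hlt
  have hmn : m ≠ n := by
    rintro rfl
    exact lt_irrefl _ hlt
  set δ := min ((β n * Q n + c n - r n) / β n) ((Q n + c n / β n - (Q m + c m / β m)) / 2)
  have hδ : 0 < δ := lt_min (div_pos (by linarith) (hβ n)) (by linarith)
  have hδn : r n ≤ β n * (Q n - δ) + c n := by
    have := (le_div_iff₀' (hβ n)).mp (min_le_left _ _ : δ ≤ _)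
    linarith
  have hδnm : δ < Q n + c n / β n - (Q m + c m / β m) :=
    (min_le_right _ _).trans_lt (by linarith)
  have hpos (i : ι) : 0 < β i * Q i + c i := (hr i).trans_le (hQ.2 i)
  exact (sumRate_lt_sub_single_add_single hβ hpos hmn hδ hδnm ((hr n).trans_le hδn)).not_ge
    (isMaxOn_iff.mp hmax _ (sub_single_add_single_mem_feasibleSet hQ hmn (hβ m).le hδ.le hδn))

theorem card_mul_le_of_isMaxOn_of_lt {β c r Q : ι → ℝ} {P : ℝ} {n : ι}
    (hβ : ∀ i, 0 < β i) (hr : ∀ i, 0 < r i) (hQ : Q ∈ feasibleSet β c r P)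
    (hmax : IsMaxOn (sumRate β c) (feasibleSet β c r P) Q) (hn : r n < β n * Q n + c n) :
    Fintype.card ι * (Q n + c n / β n) ≤ P + ∑ i, c i / β i := by
  have := Finset.card_nsmul_le_sum Finset.univ (fun i => Q i + c i / β i) _
    fun m _ => le_of_isMaxOn_of_lt hβ hr hQ hmax hn m
  rwa [Finset.sum_add_distrib, hQ.1, nsmul_eq_mul, Finset.card_univ] at this

end QoSPowerAllocation

theorem stmt_2_general (N : ℕ) (β c : Fin N → ℝ) (hβ : ∀ n, 0 < β n)
    (P : ℝ) (γ : Fin N → ℝ)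
    (Pbar : Fin N → ℝ)
    (hPbar : ∀ n, Pbar n = P / (N : ℝ) - c n / β n + (1 / (N : ℝ)) * ∑ i, c i / β i)
    (C : Set (Fin N → ℝ))
    (hC : C = {Q : Fin N → ℝ |
      (∑ n, Q n = P) ∧ ∀ n, (2 : ℝ) ^ (γ n) ≤ β n * Q n + c n})
    (Qstar : Fin N → ℝ) (hQstar : Qstar ∈ C)
    (hmax : ∀ Q ∈ C, ∑ n, Real.logb 2 (β n * Q n + c n) ≤
      ∑ n, Real.logb 2 (β n * Qstar n + c n)) :
    ∀ n, β n * Pbar n + c n < (2 : ℝ) ^ (γ n) →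
      β n * Qstar n + c n = (2 : ℝ) ^ (γ n) ∧
      Qstar n = ((2 : ℝ) ^ (γ n) - c n) / β n := by
  intro n hn
  have hC' : C = QoSPowerAllocation.feasibleSet β c (fun i => (2 : ℝ) ^ γ i) P := hC
  subst hC'
  have hN : (0 : ℝ) < N := Nat.cast_pos.mpr n.pos
  have hbind : β n * Qstar n + c n = 2 ^ γ n := by
    refine (hQstar.2 n).antisymm' (le_of_not_gt fun hslack => hn.not_ge ?_)
    have hlevel := QoSPowerAllocation.card_mul_le_of_isMaxOn_of_lt hβ
      (fun i => Real.rpow_pos_of_pos two_pos _) hQstar (isMaxOn_iff.mpr hmax) hslack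
    rw [Fintype.card_fin, ← le_div_iff₀' hN] at hlevel
    have hQP : Qstar n ≤ Pbar n := by
      rw [hPbar n]
      linarith [add_div P (∑ i, c i / β i) N, one_div_mul_eq_div (N : ℝ) (∑ i, c i / β i)]
    linarith [mul_le_mul_of_nonneg_left hQP (hβ n).le]
  exact ⟨hbind, by rw [eq_div_iff (hβ n).ne']; linarith⟩

/-- Theorem 2 of the paper: in the QoS-constrained group power allocation
problem, any global maximizer `Q*` satisfies with equality the rate constraint
of every group whose constraint is violated by the unconstrained water-filling
solution `P̄`. -/
theorem stmt_2 (N : ℕ) (hN : 1 ≤ N) (β c : Fin N → ℝ) (hβ : ∀ n, 0 < β n)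
    (P : ℝ) (hP : 0 < P + ∑ i, c i / β i) (γ : Fin N → ℝ)
    (Pbar : Fin N → ℝ)
    (hPbar : ∀ n, Pbar n = P / (N : ℝ) - c n / β n + (1 / (N : ℝ)) * ∑ i, c i / β i)
    (C : Set (Fin N → ℝ))
    (hC : C = {Q : Fin N → ℝ |
      (∑ n, Q n = P) ∧ ∀ n, (2 : ℝ) ^ (γ n) ≤ β n * Q n + c n})
    (Qstar : Fin N → ℝ) (hQstar : Qstar ∈ C)
    (hmax : ∀ Q ∈ C, ∑ n, Real.logb 2 (β n * Q n + c n) ≤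
      ∑ n, Real.logb 2 (β n * Qstar n + c n)) :
    ∀ n, β n * Pbar n + c n < (2 : ℝ) ^ (γ n) →
      β n * Qstar n + c n = (2 : ℝ) ^ (γ n) ∧
      Qstar n = ((2 : ℝ) ^ (γ n) - c n) / β n :=
  stmt_2_general N β c hβ P γ Pbar hPbar C hC Qstar hQstar hmax
end

section
/- Let β₁, β₂ > 0 and c₁, c₂ ∈ ℝ, and let P̄₁, P̄₂ ∈ ℝ satisfy β₁·P̄₁ + c₁ > 0, β₂·P̄₂ + c₂ > 0 and the equal-marginal condition β₁/(β₁·P̄₁ + c₁) = β₂/(β₂·P̄₂ + c₂). Let P̂₁, P̂₂ ∈ ℝ with P̂₁ > P̄₁, P̂₂ < P̄₂, β₁·P̂₁ + c₁ > 0 and β₂·P̂₂ + c₂ > 0. Then for every δ with 0 < δ ≤ min(P̂₁ − P̄₁, P̄₂ − P̂₂), one has log₂(β₁·(P̂₁ − δ) + c₁) + log₂(β₂·(P̂₂ + δ) + c₂) > log₂(β₁·P̂₁ + c₁) + log₂(β₂·P̂₂ + c₂). -/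
/-- Power-exchange improvement lemma (Appendix B of the paper): transferring an
amount `δ` of power from a group allocated more than its water-filling level
`P̄₁` to a group allocated less than its water-filling level `P̄₂` strictly
increases the sum of the two groups' rates `log₂(β n · P n + c n)`. -/
theorem stmt_3 (β₁ β₂ c₁ c₂ Pbar₁ Pbar₂ Phat₁ Phat₂ : ℝ)
    (hβ₁ : 0 < β₁) (hβ₂ : 0 < β₂)
    (hPbar₁ : 0 < β₁ * Pbar₁ + c₁) (hPbar₂ : 0 < β₂ * Pbar₂ + c₂)
    (heq : β₁ / (β₁ * Pbar₁ + c₁) = β₂ / (β₂ * Pbar₂ + c₂))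
    (h₁ : Pbar₁ < Phat₁) (h₂ : Phat₂ < Pbar₂)
    (hPhat₁ : 0 < β₁ * Phat₁ + c₁) (hPhat₂ : 0 < β₂ * Phat₂ + c₂) :
    ∀ δ : ℝ, 0 < δ → δ ≤ min (Phat₁ - Pbar₁) (Pbar₂ - Phat₂) →
      Real.logb 2 (β₁ * Phat₁ + c₁) + Real.logb 2 (β₂ * Phat₂ + c₂) <
      Real.logb 2 (β₁ * (Phat₁ - δ) + c₁) + Real.logb 2 (β₂ * (Phat₂ + δ) + c₂) := by
  intro δ hδ hδle
  have hδ₁ : δ ≤ Phat₁ - Pbar₁ := le_trans hδle (min_le_left _ _)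
  have hδ₂ : δ ≤ Pbar₂ - Phat₂ := le_trans hδle (min_le_right _ _)
  -- cross-multiplied equal-marginal condition
  have hcross : β₁ * (β₂ * Pbar₂ + c₂) = β₂ * (β₁ * Pbar₁ + c₁) := by
    field_simp at heq
    linarith [heq]
  have hx : 0 < β₁ * (Phat₁ - δ) + c₁ := by nlinarith
  have hy : 0 < β₂ * (Phat₂ + δ) + c₂ := by nlinarith
  have hprod : (β₁ * Phat₁ + c₁) * (β₂ * Phat₂ + c₂) <
      (β₁ * (Phat₁ - δ) + c₁) * (β₂ * (Phat₂ + δ) + c₂) := by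
    nlinarith [mul_pos hβ₁ hβ₂, mul_pos (mul_pos hβ₁ hβ₂) hδ]
  calc Real.logb 2 (β₁ * Phat₁ + c₁) + Real.logb 2 (β₂ * Phat₂ + c₂)
      = Real.logb 2 ((β₁ * Phat₁ + c₁) * (β₂ * Phat₂ + c₂)) :=
        (Real.logb_mul (ne_of_gt hPhat₁) (ne_of_gt hPhat₂)).symm
    _ < Real.logb 2 ((β₁ * (Phat₁ - δ) + c₁) * (β₂ * (Phat₂ + δ) + c₂)) := by
        apply Real.logb_lt_logb (by norm_num) (mul_pos hPhat₁ hPhat₂) hprod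
    _ = Real.logb 2 (β₁ * (Phat₁ - δ) + c₁) + Real.logb 2 (β₂ * (Phat₂ + δ) + c₂) :=
        Real.logb_mul (ne_of_gt hx) (ne_of_gt hy)
end
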